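/- arXiv:2211.10743 — 2 statements merged into one kernel-verified Lean document; each statement's English description precedes it below -/
import Mathlib

section
/- For any vertex (u_i,v_j) of G □ H, EM_{G□H}((u_i,v_j)) = EM_{H_i}(u_i-layer copy of v_j) ∪ EM_{G_j}(v_j-layer copy of u_i); i.e., the edges monitored by (u_i,v_j) in G□H are exactly the edges monitored within its H-layer and its G-layer. -/
open SimpleGraph

/-- A set `M` of vertices is a distance-edge-monitoring set of `G`. -/
def demSet {V : Type*} (G : SimpleGraph V) (M : Set V) : Prop :=
  ∀ e ∈ G.edgeSet, ∃ x ∈ M, ∃ y : V, G.dist x y ≠ (G.deleteEdges {e}).dist x y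

/-- The distance-edge-monitoring number of `G`. -/
noncomputable def dem {V : Type*} (G : SimpleGraph V) [Fintype V] : ℕ :=
  sInf {k | ∃ M : Finset V, M.card = k ∧ demSet G ↑M}

/-- The set of edges of `G` monitored by the vertex `x`. -/
def EM {V : Type*} (G : SimpleGraph V) (x : V) : Set (Sym2 V) :=
  {e | e ∈ G.edgeSet ∧ ∃ v : V, G.dist x v ≠ (G.deleteEdges {e}).dist x v}

/-! The distance in `G □ H` is the sum of the distances in the factors (`edist_boxProd`), so the
geodesics from `(u, v)` to `(x, y)` include the L-shaped walks that follow a geodesic of `G` inside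
the layer of `v` and then a geodesic of `H`. A `G`-edge outside the layer of `v`, or one in that
layer avoided by some geodesic of `G`, is avoided by one of these walks and is not monitored.
Conversely, if every geodesic of `G` from `u` to `x` uses `e`, a walk from `(u, v)` to `(x, v)`
avoiding the copy of `e` either projects to a walk of `G` avoiding `e`, or leaves the layer of `v`
and pays two `H`-steps; a potential function turns this into a distance bound. `H`-edges are
handled by swapping the factors. -/

namespace SimpleGraph

variable {V V' W : Type*} {G : SimpleGraph V} {G' : SimpleGraph V'} {H : SimpleGraph W}

lemma edist_le_edist_add_one_of_adj {a b c : V} (h : G.Adj a b) :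
    G.edist a c ≤ G.edist b c + 1 :=
  calc G.edist a c ≤ G.edist a b + G.edist b c := G.edist_triangle
    _ = G.edist b c + 1 := by rw [edist_eq_one_iff_adj.2 h, add_comm]

lemma le_edist_of_le_add_one {f : V → ℕ∞} {t : V} (ht : f t = 0)
    (hf : ∀ a b, G.Adj a b → f a ≤ f b + 1) (a : V) : f a ≤ G.edist a t := by
  have walk_bound : ∀ {a} (p : G.Walk a t), f a ≤ p.length := by
    intro a p
    induction p with
    | nil => simp [ht]
    | cons h p ih =>
      rw [Walk.length_cons, Nat.cast_succ]
      exact (hf _ _ h).trans (by gcongr; exact ih ht)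
  rw [edist_eq_sInf]
  exact le_sInf (Set.forall_mem_range.2 walk_bound)

lemma Hom.edist_le (f : G →g G') (a b : V) : G'.edist (f a) (f b) ≤ G.edist a b := by
  rw [edist_eq_sInf (G := G)]
  refine le_sInf (Set.forall_mem_range.2 fun p => ?_)
  simpa using SimpleGraph.edist_le (p.map f)

lemma Iso.edist_eq (f : G ≃g G') (a b : V) : G'.edist (f a) (f b) = G.edist a b :=
  le_antisymm (f.toHom.edist_le a b) (by simpa using f.symm.toHom.edist_le (f a) (f b))

lemma Iso.dist_eq (f : G ≃g G') (a b : V) : G'.dist (f a) (f b) = G.dist a b := by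
  rw [dist, dist, f.edist_eq]

def Iso.deleteEdges (f : G ≃g G') (s : Set (Sym2 V)) :
    G.deleteEdges s ≃g G'.deleteEdges (Sym2.map f '' s) where
  toEquiv := f.toEquiv
  map_rel_iff' {a b} := by
    rw [deleteEdges_adj, deleteEdges_adj]
    exact and_congr f.map_adj_iff
      (not_congr ((Sym2.map.injective f.injective).mem_set_image (a := s(a, b))))

/-- Moves from `dist`, whose junk value is `0` on unreachable pairs, to `edist`. -/
lemma dist_ne_dist_iff {G' : SimpleGraph V} (h : G' ≤ G) {a b : V} :
    G.dist a b ≠ G'.dist a b ↔ G.Reachable a b ∧ G.edist a b ≠ G'.edist a b := by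
  constructor
  · intro hne
    have hr : G.Reachable a b := by
      by_contra hr
      exact hne (by rw [dist_eq_zero_of_not_reachable hr,
        dist_eq_zero_of_not_reachable fun hr' => hr (hr'.mono h)])
    exact ⟨hr, fun heq => hne (by rw [dist, dist, heq])⟩
  · rintro ⟨hr, hne⟩ heq
    by_cases hr' : G'.Reachable a b
    · exact hne (by rw [← hr.coe_dist_eq_edist, ← hr'.coe_dist_eq_edist, heq])
    · rw [dist_eq_zero_of_not_reachable hr', hr.dist_eq_zero_iff] at heq
      exact hr' (heq ▸ Reachable.refl _)

lemma edist_deleteEdges_eq_iff_exists_walk {e : Sym2 V} {a b : V} (hr : G.Reachable a b) :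
    (G.deleteEdges {e}).edist a b = G.edist a b ↔
      ∃ p : G.Walk a b, p.length = G.edist a b ∧ e ∉ p.edges := by
  constructor
  · intro heq
    have hr' : (G.deleteEdges {e}).Reachable a b := by
      rw [← edist_ne_top_iff_reachable, heq, edist_ne_top_iff_reachable]
      exact hr
    obtain ⟨p, hp⟩ := hr'.exists_walk_length_eq_edist
    refine ⟨p.mapLe (G.deleteEdges_le _), by rw [Walk.length_mapLe, hp, heq], fun he => ?_⟩
    rw [Walk.edges_mapLe_eq_edges] at he
    simpa [edgeSet_deleteEdges] using p.edges_subset_edgeSet he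
  · rintro ⟨p, hp, he⟩
    refine le_antisymm ?_ (edist_anti (G.deleteEdges_le _))
    calc _ ≤ ((p.toDeleteEdge e he).length : ℕ∞) := edist_le _
      _ = G.edist a b := by rw [Walk.length_transfer, hp]

lemma Walk.length_boxProdLeft {a a' : V} (b : W) (p : G.Walk a a') :
    (p.boxProdLeft H b).length = p.length :=
  Walk.length_map _ _

lemma Walk.length_boxProdRight (a : V) {b b' : W} (p : H.Walk b b') :
    (p.boxProdRight G a).length = p.length :=
  Walk.length_map _ _

lemma Walk.edges_boxProdLeft {a a' : V} (b : W) (p : G.Walk a a') :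
    (p.boxProdLeft H b).edges = p.edges.map (Sym2.map (·, b)) :=
  Walk.edges_map _ _

lemma Walk.edges_boxProdRight (a : V) {b b' : W} (p : H.Walk b b') :
    (p.boxProdRight G a).edges = p.edges.map (Sym2.map (a, ·)) :=
  Walk.edges_map _ _

end SimpleGraph

section

variable {V V' W : Type*} {G : SimpleGraph V} {G' : SimpleGraph V'} {H : SimpleGraph W}

lemma mem_EM_iff {x : V} {e : Sym2 V} :
    e ∈ EM G x ↔ e ∈ G.edgeSet ∧
      ∃ y, G.Reachable x y ∧ G.edist x y ≠ (G.deleteEdges {e}).edist x y := by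
  simp only [EM, Set.mem_ofPred_eq, dist_ne_dist_iff (G.deleteEdges_le _)]

lemma SimpleGraph.Iso.map_mem_EM_iff (f : G ≃g G') {x : V} {e : Sym2 V} :
    Sym2.map f e ∈ EM G' (f x) ↔ e ∈ EM G x := by
  have dist_deleteEdges : ∀ y, (G'.deleteEdges {Sym2.map f e}).dist (f x) (f y) =
      (G.deleteEdges {e}).dist x y := by
    intro y
    rw [← Set.image_singleton]
    exact (f.deleteEdges {e}).dist_eq x y
  simp only [EM, Set.mem_ofPred_eq, f.map_mem_edgeSet_iff]
  refine and_congr_right' ⟨fun ⟨y, hy⟩ => ⟨f.symm y, ?_⟩, fun ⟨y, hy⟩ => ⟨f y, ?_⟩⟩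
  · rwa [← f.apply_symm_apply y, f.dist_eq, dist_deleteEdges] at hy
  · rwa [f.dist_eq, dist_deleteEdges]

lemma mem_edges_boxProd_append {u x a a' : V} {v y b : W} (pG : G.Walk u x) (pH : H.Walk v y)
    (ha : a ≠ a')
    (h : s((a, b), (a', b)) ∈ ((pG.boxProdLeft H v).append (pH.boxProdRight G x)).edges) :
    b = v ∧ s(a, a') ∈ pG.edges := by
  rw [Walk.edges_append, List.mem_append, Walk.edges_boxProdLeft, Walk.edges_boxProdRight,
    List.mem_map, List.mem_map] at h
  rcases h with ⟨g, hg, hgab⟩ | ⟨g, -, hgab⟩ <;> induction g using Sym2.ind with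
  | h c c' =>
    simp only [Sym2.map_mk, Sym2.eq_iff, Prod.mk.injEq] at hgab
    grind [Sym2.eq_swap]

lemma min_edist_le_edist_deleteEdges_boxProd (e : Sym2 V) (u x : V) (v : W) :
    min ((G.deleteEdges {e}).edist u x) (G.edist u x + 2) ≤
      ((G □ H).deleteEdges {Sym2.map (·, v) e}).edist (u, v) (x, v) := by
  classical
  set g : W → ℕ∞ := fun b => if b = v then 2 else H.edist b v
  have g_step : ∀ b b', H.Adj b b' → g b ≤ g b' + 1 := by
    intro b b' hb
    by_cases hbv : b = v
    · subst hbv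
      simp [g, hb.ne.symm, SimpleGraph.edist_comm, edist_eq_one_iff_adj.2 hb, one_add_one_eq_two]
    by_cases hbv' : b' = v
    · subst hbv'
      simp [g, hbv, edist_eq_one_iff_adj.2 hb]
    simpa only [g, if_neg hbv, if_neg hbv'] using edist_le_edist_add_one_of_adj hb
  -- `φ z` bounds below the length of a walk from `z` to `(x, v)` avoiding the copy of `e`: either
  -- its `G`-steps avoid `e`, or it crosses a copy of `e` outside the layer of `v` and `g` charges
  -- for the `H`-steps back to that layer (two of them if the walk starts in it)
  set φ : V × W → ℕ∞ := fun z =>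
    min ((G.deleteEdges {e}).edist z.1 x + H.edist z.2 v) (G.edist z.1 x + g z.2)
  have hφ := le_edist_of_le_add_one (G := (G □ H).deleteEdges {Sym2.map (·, v) e}) (f := φ)
    (t := (x, v)) (by simp [φ, g]) ?_ (u, v)
  · simpa [φ, g] using hφ
  rintro ⟨a, b⟩ ⟨a', b'⟩ hadj
  simp only [deleteEdges_adj, boxProd_adj, Set.mem_singleton_iff] at hadj
  simp only [φ, ← min_add_add_right]
  obtain ⟨⟨hG, rfl⟩ | ⟨hH, rfl⟩, hne⟩ := hadj
  · by_cases hae : s(a, a') = e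
    · have hbv : b ≠ v := by
        rintro rfl
        exact hne (by rw [← hae]; rfl)
      have hgb : g b = H.edist b v := if_neg hbv
      have hB : G.edist a x + g b ≤ G.edist a' x + H.edist b v + 1 := by
        rw [hgb, add_right_comm]
        gcongr
        exact edist_le_edist_add_one_of_adj hG
      refine min_le_of_right_le (le_min (hB.trans ?_) (hB.trans ?_))
      · gcongr
        exact G.deleteEdges_le _
      · rw [hgb]
    · have hG' : (G.deleteEdges {e}).Adj a a' := deleteEdges_adj.2 ⟨hG, hae⟩
      refine min_le_min ?_ ?_ <;> rw [add_right_comm] <;> gcongr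
      · exact edist_le_edist_add_one_of_adj hG'
      · exact edist_le_edist_add_one_of_adj hG
  · refine min_le_min ?_ ?_ <;> rw [add_assoc] <;> gcongr
    · exact edist_le_edist_add_one_of_adj hH
    · exact g_step b b' hH

lemma mem_EM_boxProd_left_iff {u a a' : V} {v b : W} (hadj : G.Adj a a') :
    s((a, b), (a', b)) ∈ EM (G □ H) (u, v) ↔ b = v ∧ s(a, a') ∈ EM G u := by
  constructor
  · intro h
    obtain ⟨-, ⟨x, y⟩, hr, hne⟩ := mem_EM_iff.1 h
    obtain ⟨hrG, hrH⟩ := reachable_boxProd.1 hr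
    obtain ⟨pH, hpH⟩ := hrH.exists_walk_length_eq_edist
    have through_every_geodesic : ∀ pG : G.Walk u x, pG.length = G.edist u x →
        b = v ∧ s(a, a') ∈ pG.edges := by
      intro pG hpG
      by_contra hav
      refine hne ((edist_deleteEdges_eq_iff_exists_walk hr).2
        ⟨(pG.boxProdLeft H v).append (pH.boxProdRight G x), ?_,
          fun he => hav (mem_edges_boxProd_append pG pH hadj.ne he)⟩).symm
      rw [edist_boxProd, Walk.length_append, Walk.length_boxProdLeft, Walk.length_boxProdRight,
        Nat.cast_add, hpG, hpH]
    obtain ⟨pG, hpG⟩ := hrG.exists_walk_length_eq_edist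
    refine ⟨(through_every_geodesic pG hpG).1, mem_EM_iff.2 ⟨hadj, x, hrG, fun heq => ?_⟩⟩
    obtain ⟨q, hq, hqe⟩ := (edist_deleteEdges_eq_iff_exists_walk hrG).1 heq.symm
    exact hqe (through_every_geodesic q hq).2
  · rintro ⟨rfl, h⟩
    obtain ⟨-, x, hr, hne⟩ := mem_EM_iff.1 h
    refine mem_EM_iff.2 ⟨boxProd_adj_left.2 hadj, (x, b), reachable_boxProd.2 ⟨hr, .rfl⟩, ?_⟩
    have hlower := min_edist_le_edist_deleteEdges_boxProd (G := G) (H := H) s(a, a') u x b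
    rw [edist_boxProd, edist_self, add_zero]
    refine (lt_of_lt_of_le (lt_min ?_ ?_) hlower).ne
    · exact lt_of_le_of_ne (edist_anti (G.deleteEdges_le _)) hne
    · lift G.edist u x to ℕ using edist_ne_top_iff_reachable.2 hr with d
      exact_mod_cast Nat.lt_add_of_pos_right two_pos

lemma mem_EM_boxProd_right_iff {u a : V} {v b b' : W} (hadj : H.Adj b b') :
    s((a, b), (a, b')) ∈ EM (G □ H) (u, v) ↔ a = u ∧ s(b, b') ∈ EM H v :=
  (boxProdComm G H).map_mem_EM_iff.symm.trans (mem_EM_boxProd_left_iff hadj)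

end

theorem stmt_12_general {V W : Type*} (G : SimpleGraph V) (H : SimpleGraph W)
    (u : V) (v : W) :
    EM (G □ H) (u, v) =
      (Sym2.map fun w : W => (u, w)) '' EM H v ∪
      (Sym2.map fun a : V => (a, v)) '' EM G u := by
  refine Set.Subset.antisymm (fun e he => ?_) ?_
  · induction e using Sym2.ind with | h p q => ?_
    obtain ⟨a, b⟩ := p
    obtain ⟨a', b'⟩ := q
    rcases boxProd_adj.1 he.1 with ⟨hG, rfl : b = b'⟩ | ⟨hH, rfl : a = a'⟩
    · obtain ⟨rfl, hEM⟩ := (mem_EM_boxProd_left_iff hG).1 he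
      exact Or.inr ⟨s(a, a'), hEM, rfl⟩
    · obtain ⟨rfl, hEM⟩ := (mem_EM_boxProd_right_iff hH).1 he
      exact Or.inl ⟨s(b, b'), hEM, rfl⟩
  · rintro _ (⟨e, he, rfl⟩ | ⟨e, he, rfl⟩) <;> induction e using Sym2.ind with | h c c' => ?_
    · exact (mem_EM_boxProd_right_iff he.1).2 ⟨rfl, he⟩
    · exact (mem_EM_boxProd_left_iff he.1).2 ⟨rfl, he⟩

theorem stmt_12 {V W : Type*} (G : SimpleGraph V) (H : SimpleGraph W)
    (hG : G.Connected) (hH : H.Connected) (u : V) (v : W) :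
    EM (G □ H) (u, v) =
      (Sym2.map fun w : W => (u, w)) '' EM H v ∪
      (Sym2.map fun a : V => (a, v)) '' EM G u :=
  stmt_12_general G H u v
end

section
/- For two complete graphs K_m and K_n with m, n ≥ 3, dem(K_m □ K_n) = mn − min{m, n}. -/
open SimpleGraph

lemma dist_eq_two' {V : Type*} {H : SimpleGraph V} {x y z : V} (hxy : ¬ H.Adj x y) (hne : x ≠ y)
    (h1 : H.Adj x z) (h2 : H.Adj z y) : H.dist x y = 2 := by
  have hw : H.Walk x y := Walk.cons h1 (Walk.cons h2 Walk.nil)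
  have hle : H.dist x y ≤ 2 := by
    have := H.dist_le (Walk.cons h1 (Walk.cons h2 Walk.nil))
    simpa using this
  have h0 : H.dist x y ≠ 0 := by
    rw [ne_eq, SimpleGraph.dist_eq_zero_iff_eq_or_not_reachable]
    push_neg
    exact ⟨hne, hw.reachable⟩
  have h1' : H.dist x y ≠ 1 := fun h => hxy (SimpleGraph.dist_eq_one_iff_adj.mp h)
  omega

lemma rook_adj {m n : ℕ} (x y : Fin m × Fin n) :
    ((⊤ : SimpleGraph (Fin m)) □ (⊤ : SimpleGraph (Fin n))).Adj x y ↔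
      (x.1 = y.1 ∧ x.2 ≠ y.2) ∨ (x.1 ≠ y.1 ∧ x.2 = y.2) := by
  simp only [boxProd_adj, top_adj]
  tauto

/-- Deleting an edge not incident to `x` does not change distances from `x` in the rook graph. -/
lemma rook_pres {m n : ℕ} (e : Sym2 (Fin m × Fin n)) (x y : Fin m × Fin n) (hxe : x ∉ e) :
    ((⊤ : SimpleGraph (Fin m)) □ (⊤ : SimpleGraph (Fin n))).dist x y
      = (((⊤ : SimpleGraph (Fin m)) □ (⊤ : SimpleGraph (Fin n))).deleteEdges {e}).dist x y := by
  set R := (⊤ : SimpleGraph (Fin m)) □ (⊤ : SimpleGraph (Fin n)) with hR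
  by_cases hxy : x = y
  · subst hxy; rw [SimpleGraph.dist_self, SimpleGraph.dist_self]
  by_cases hadj : R.Adj x y
  · have hne : s(x, y) ≠ e := fun h => hxe (h ▸ Sym2.mem_mk_left x y)
    have hadj' : (R.deleteEdges {e}).Adj x y := by
      rw [SimpleGraph.deleteEdges_adj]
      exact ⟨hadj, by simpa using hne⟩
    rw [SimpleGraph.dist_eq_one_iff_adj.mpr hadj, SimpleGraph.dist_eq_one_iff_adj.mpr hadj']
  · -- x and y differ in both coordinates
    have h1 : x.1 ≠ y.1 := by
      intro h
      exact hadj ((rook_adj x y).mpr (Or.inl ⟨h, fun h2 => hxy (Prod.ext h h2)⟩))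
    have h2 : x.2 ≠ y.2 := by
      intro h
      exact hadj ((rook_adj x y).mpr (Or.inr ⟨h1, h⟩))
    set p : Fin m × Fin n := (x.1, y.2) with hp
    set q : Fin m × Fin n := (y.1, x.2) with hq
    have haxp : R.Adj x p := (rook_adj x p).mpr (Or.inl ⟨rfl, h2⟩)
    have hapy : R.Adj p y := (rook_adj p y).mpr (Or.inr ⟨h1, rfl⟩)
    have haxq : R.Adj x q := (rook_adj x q).mpr (Or.inr ⟨h1, rfl⟩)
    have haqy : R.Adj q y := (rook_adj q y).mpr (Or.inl ⟨rfl, h2⟩)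
    have hd1 : R.dist x y = 2 := dist_eq_two' hadj hxy haxp hapy
    have hadj2 : ¬ (R.deleteEdges {e}).Adj x y := fun h => hadj h.1
    have d1 : s(x, p) ≠ s(x, q) := by
      rw [ne_eq, Sym2.eq_iff]
      rintro (⟨-, hpq⟩ | ⟨hxq, -⟩)
      · have h' : p.1 = q.1 := congrArg Prod.fst hpq
        exact h1 h'
      · have h' : x.1 = q.1 := congrArg Prod.fst hxq
        exact h1 h'
    have d2 : s(x, p) ≠ s(q, y) := by
      rw [ne_eq, Sym2.eq_iff]
      rintro (⟨hxq, -⟩ | ⟨hxy', -⟩)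
      · have h' : x.1 = q.1 := congrArg Prod.fst hxq
        exact h1 h'
      · exact hxy hxy'
    have d3 : s(p, y) ≠ s(x, q) := by
      rw [ne_eq, Sym2.eq_iff]
      rintro (⟨hpx, -⟩ | ⟨hpq, -⟩)
      · have h' : p.2 = x.2 := congrArg Prod.snd hpx
        exact h2 h'.symm
      · have h' : p.1 = q.1 := congrArg Prod.fst hpq
        exact h1 h'
    have d4 : s(p, y) ≠ s(q, y) := by
      rw [ne_eq, Sym2.eq_iff]
      rintro (⟨hpq, -⟩ | ⟨hpy, -⟩)
      · have h' : p.1 = q.1 := congrArg Prod.fst hpq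
        exact h1 h'
      · have h' : p.1 = y.1 := congrArg Prod.fst hpy
        exact h1 h'
    have key : (e ≠ s(x, p) ∧ e ≠ s(p, y)) ∨ (e ≠ s(x, q) ∧ e ≠ s(q, y)) := by
      by_cases hxp : e = s(x, p)
      · exact Or.inr ⟨fun h => d1 (hxp.symm.trans h), fun h => d2 (hxp.symm.trans h)⟩
      by_cases hpy : e = s(p, y)
      · exact Or.inr ⟨fun h => d3 (hpy.symm.trans h), fun h => d4 (hpy.symm.trans h)⟩
      exact Or.inl ⟨hxp, hpy⟩
    have hd2 : (R.deleteEdges {e}).dist x y = 2 := by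
      rcases key with ⟨k1, k2⟩ | ⟨k1, k2⟩
      · exact dist_eq_two' hadj2 hxy
          ((SimpleGraph.deleteEdges_adj).mpr ⟨haxp, fun h => k1 (Set.mem_singleton_iff.mp h).symm⟩)
          ((SimpleGraph.deleteEdges_adj).mpr ⟨hapy, fun h => k2 (Set.mem_singleton_iff.mp h).symm⟩)
      · exact dist_eq_two' hadj2 hxy
          ((SimpleGraph.deleteEdges_adj).mpr ⟨haxq, fun h => k1 (Set.mem_singleton_iff.mp h).symm⟩)
          ((SimpleGraph.deleteEdges_adj).mpr ⟨haqy, fun h => k2 (Set.mem_singleton_iff.mp h).symm⟩)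
    rw [hd1, hd2]

theorem stmt_19 (m n : ℕ) (hm : 3 ≤ m) (hn : 3 ≤ n) :
    dem ((⊤ : SimpleGraph (Fin m)) □ (⊤ : SimpleGraph (Fin n))) = m * n - min m n := by
  classical
  set R := (⊤ : SimpleGraph (Fin m)) □ (⊤ : SimpleGraph (Fin n)) with hR
  set D : Finset (Fin m × Fin n) :=
    Finset.univ.filter (fun p => (p.1 : ℕ) = (p.2 : ℕ)) with hD
  have hDcard : D.card = min m n := by
    apply Finset.card_eq_of_bijective
      (fun i hi => (⟨i, lt_of_lt_of_le hi (min_le_left m n)⟩,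
        ⟨i, lt_of_lt_of_le hi (min_le_right m n)⟩))
    · intro a ha
      have ha' : (a.1 : ℕ) = (a.2 : ℕ) := by simpa [hD] using ha
      refine ⟨(a.1 : ℕ), lt_min a.1.2 (ha' ▸ a.2.2), ?_⟩
      refine Prod.ext (Fin.ext rfl) (Fin.ext ?_)
      simpa using ha'
    · intro i hi
      simp [hD]
    · intro i j hi hj hij
      simpa using congrArg (fun p => ((p.1 : Fin m) : ℕ)) hij
  have hcardMn : Fintype.card (Fin m × Fin n) = m * n := by
    simp [Fintype.card_prod]
  -- membership: the complement of the diagonal is a dem set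
  have hmem : (m * n - min m n) ∈
      {k | ∃ M : Finset (Fin m × Fin n), M.card = k ∧ demSet R ↑M} := by
    refine ⟨Dᶜ, ?_, ?_⟩
    · rw [Finset.card_compl, hDcard, hcardMn]
    · intro e he
      induction e using Sym2.ind with
      | _ u v =>
        rw [SimpleGraph.mem_edgeSet] at he
        have hcov : u ∈ Dᶜ ∨ v ∈ Dᶜ := by
          by_contra hc
          push_neg at hc
          obtain ⟨hu, hv⟩ := hc
          rw [Finset.notMem_compl] at hu hv
          have hu' : (u.1 : ℕ) = (u.2 : ℕ) := by simpa [hD] using hu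
          have hv' : (v.1 : ℕ) = (v.2 : ℕ) := by simpa [hD] using hv
          rcases (rook_adj u v).mp he with ⟨h1, h2⟩ | ⟨h1, h2⟩
          · have : (u.1 : ℕ) = (v.1 : ℕ) := congrArg Fin.val h1
            exact h2 (Fin.ext (by omega))
          · have : (u.2 : ℕ) = (v.2 : ℕ) := congrArg Fin.val h2
            exact h1 (Fin.ext (by omega))
        have hkey : ∀ x y : Fin m × Fin n, R.Adj x y → s(x, y) = s(u, v) →
            R.dist x y ≠ (R.deleteEdges {s(u, v)}).dist x y := by
          intro x y hadj heq
          have hnadj : ¬ (R.deleteEdges {s(u, v)}).Adj x y := by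
            intro h
            exact ((SimpleGraph.deleteEdges_adj).mp h).2 (Set.mem_singleton_iff.mpr heq)
          rw [SimpleGraph.dist_eq_one_iff_adj.mpr hadj]
          intro h
          exact hnadj (SimpleGraph.dist_eq_one_iff_adj.mp h.symm)
        rcases hcov with hu | hv
        · exact ⟨u, Finset.mem_coe.mpr hu, v, hkey u v he rfl⟩
        · exact ⟨v, Finset.mem_coe.mpr hv, u, hkey v u he.symm (Sym2.eq_swap)⟩
  -- lower bound: every dem set has at least m*n - min m n vertices
  have hlb : ∀ k ∈ {k | ∃ M : Finset (Fin m × Fin n), M.card = k ∧ demSet R ↑M},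
      m * n - min m n ≤ k := by
    rintro k ⟨M, hMcard, hMdem⟩
    set C := Mᶜ with hC
    have hind : ∀ u ∈ C, ∀ v ∈ C, u ≠ v → ¬ R.Adj u v := by
      intro u hu v hv huv hadj
      obtain ⟨x, hxM, y, hxy⟩ := hMdem s(u, v) (R.mem_edgeSet.mpr hadj)
      apply hxy
      apply rook_pres
      intro hmem'
      rcases Sym2.mem_iff.mp hmem' with rfl | rfl
      · exact (Finset.mem_compl.mp hu) (Finset.mem_coe.mp hxM)
      · exact (Finset.mem_compl.mp hv) (Finset.mem_coe.mp hxM)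
    have hCm : C.card ≤ m := by
      have := Finset.card_le_card_of_injOn (s := C) (f := Prod.fst) (t := (Finset.univ : Finset (Fin m)))
        (fun a _ => Finset.mem_univ a.1) ?_
      · simpa using this
      · intro a ha b hb hab
        by_contra hne
        have h2 : a.2 ≠ b.2 := fun h => hne (Prod.ext hab h)
        exact hind a (Finset.mem_coe.mp ha) b (Finset.mem_coe.mp hb) hne
          ((rook_adj a b).mpr (Or.inl ⟨hab, h2⟩))
    have hCn : C.card ≤ n := by
      have := Finset.card_le_card_of_injOn (s := C) (f := Prod.snd) (t := (Finset.univ : Finset (Fin n)))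
        (fun a _ => Finset.mem_univ a.2) ?_
      · simpa using this
      · intro a ha b hb hab
        by_contra hne
        have h1 : a.1 ≠ b.1 := fun h => hne (Prod.ext h hab)
        exact hind a (Finset.mem_coe.mp ha) b (Finset.mem_coe.mp hb) hne
          ((rook_adj a b).mpr (Or.inr ⟨h1, hab⟩))
    have hCmin : C.card ≤ min m n := le_min hCm hCn
    have hsum : M.card + C.card = m * n := by
      have := Finset.card_add_card_compl M
      rw [hcardMn] at this
      exact this
    omega
  rw [dem]
  exact le_antisymm (Nat.sInf_le hmem) (le_csInf ⟨_, hmem⟩ hlb)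
end
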